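/- The norm of the dual ℛ* of Read's space is 2/3-rough: for every x* in the unit sphere of ℛ* , limsup_{‖h‖→0} (‖x* + h‖ + ‖x* − h‖ − 2‖x*‖)/‖h‖ ≥ 2/3. -/

import Mathlib

open Filter Topology NormedSpace

/-- The sup norm of a real sequence. -/
noncomputable def supNorm (x : ℕ → ℝ) : ℝ := ⨆ k, |x k|

/-- The duality pairing `⟨x, v⟩ = ∑ₖ x k * v k`. -/
noncomputable def pairing (x v : ℕ → ℝ) : ℝ := ∑' k, x k * v k

/-- Read's norm `|||x||| = ‖x‖_∞ + ∑ₙ rₙ |⟨x, vₙ⟩|`. -/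
noncomputable def readNorm (r : ℕ → ℝ) (v : ℕ → ℕ → ℝ) (x : ℕ → ℝ) : ℝ :=
  supNorm x + ∑' n, r n * |pairing x (v n)|

/-!
If a slice `{y ∈ B_X : f y > 1 - η}` contains the midpoint `x` of a segment `[x - w, x + w]` of
the unit ball, then for `h = t • g` with `g` norming `w`, evaluating `f + h` at `x + w` and
`f - h` at `x - w` gives `‖f + h‖ + ‖f - h‖ ≥ 2 f x + 2 t ‖w‖`; so segments with `‖w‖ ≈ d / 2`
in every slice make the dual norm `d`-rough at `f`.

In Read's space take `x` with `‖x‖ < 1` and `f x > 1 - η`, so `‖x‖_∞ ≥ ‖x‖ / 3 ≈ 1 / 3`.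
Far out, both `|x k|` and `∑ₙ rₙ |vₙ k|` are small (dominated convergence). Adding
`± (‖x‖ / 3) eₖ` raises the sup part by at most `|x k|`, because `‖x‖_∞` already dominates the
new coordinate, and the pairing part by at most `(‖x‖ / 3) ∑ₙ rₙ |vₙ k|`. Hence `x ± w` with
`w = (‖x‖ / 3) eₖ` stay in the unit ball while `‖w‖ ≥ ‖x‖ / 3`.
-/

open Set

theorem ContinuousLinearMap.exists_norm_lt_one_lt_apply {X : Type*} [NormedAddCommGroup X]
    [NormedSpace ℝ X] (f : StrongDual ℝ X) {a : ℝ} (ha : a < ‖f‖) :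
    ∃ x, ‖x‖ < 1 ∧ a < f x := by
  obtain ⟨x, hx, hfx⟩ := f.exists_lt_apply_of_lt_opNorm ha
  rw [Real.norm_eq_abs] at hfx
  rcases le_or_gt 0 (f x) with h | h
  · exact ⟨x, hx, by rwa [abs_of_nonneg h] at hfx⟩
  · exact ⟨-x, by rwa [norm_neg], by rwa [map_neg, ← abs_of_neg h]⟩

theorem ContinuousLinearMap.dual_norm_rough_of_segments {X : Type*} [NormedAddCommGroup X]
    [NormedSpace ℝ X] (f : StrongDual ℝ X) (hf : ‖f‖ = 1) (d : ℝ)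
    (hseg : ∀ η > 0, ∃ x w : X, ‖x + w‖ ≤ 1 ∧ ‖x - w‖ ≤ 1 ∧ 1 - η < f x ∧ d / 2 - η ≤ ‖w‖) :
    ∀ ε > 0, ∀ δ > 0, ∃ h : StrongDual ℝ X, 0 < ‖h‖ ∧ ‖h‖ < δ ∧
      (‖f + h‖ + ‖f - h‖ - 2 * ‖f‖) / ‖h‖ > d - ε := by
  intro ε hε δ hδ
  obtain ⟨t, ht0, htδ⟩ : ∃ t, 0 < t ∧ t < δ := ⟨δ / 2, by positivity, by linarith⟩
  -- `2 * η * (t + 1)` is what the final estimate loses against `d * t`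
  obtain ⟨η, hη0, hηt⟩ : ∃ η > 0, 2 * η * (t + 1) = ε * t :=
    ⟨ε * t / (2 * (t + 1)), by positivity, by field_simp⟩
  obtain ⟨x, w, hxw, hxw', hfx, hw⟩ := hseg η hη0
  have : Nontrivial X := by
    by_contra hX
    rw [not_nontrivial_iff_subsingleton] at hX
    simp [Subsingleton.elim f 0] at hf
  obtain ⟨g, hg, hgw⟩ := exists_dual_vector' ℝ w
  rw [RCLike.ofReal_real_eq_id, id] at hgw
  have hh : ‖t • g‖ = t := by rw [norm_smul, hg, Real.norm_of_nonneg ht0.le, mul_one]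
  refine ⟨t • g, hh.symm ▸ ht0, hh.symm ▸ htδ, ?_⟩
  have apply_le (φ : StrongDual ℝ X) {y : X} (hy : ‖y‖ ≤ 1) : φ y ≤ ‖φ‖ :=
    (le_abs_self _).trans (φ.unit_le_opNorm y hy)
  have hsum : 2 * f x + 2 * t * ‖w‖ ≤ ‖f + t • g‖ + ‖f - t • g‖ := by
    have := add_le_add (apply_le (f + t • g) hxw) (apply_le (f - t • g) hxw')
    simp only [add_apply, sub_apply, smul_apply, map_add, map_sub, hgw, smul_eq_mul] at this
    linarith
  rw [hh, hf, gt_iff_lt, lt_div_iff₀ ht0]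
  linarith [mul_le_mul_of_nonneg_left hw ht0.le]

section Sequences

variable {x : ℕ → ℝ}

theorem abs_le_supNorm (hx : BddAbove (range fun k => |x k|)) (k : ℕ) : |x k| ≤ supNorm x :=
  le_ciSup hx k

theorem supNorm_nonneg (x : ℕ → ℝ) : 0 ≤ supNorm x :=
  Real.iSup_nonneg fun k => abs_nonneg (x k)

theorem supNorm_add_single_le (hx : BddAbove (range fun k => |x k|)) {k : ℕ} {c : ℝ}
    (hc : |c| ≤ supNorm x) : supNorm (x + Pi.single k c) ≤ supNorm x + |x k| := by
  refine ciSup_le fun j => ?_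
  rcases eq_or_ne j k with rfl | hj
  · simpa using (abs_add_le (x j) c).trans (by linarith)
  · simpa [hj] using (abs_le_supNorm hx j).trans (le_add_of_nonneg_right (abs_nonneg (x k)))

theorem abs_pairing_le {v : ℕ → ℝ} (hv : Summable fun k => |v k|) {M : ℝ}
    (hx : ∀ k, |x k| ≤ M) : |pairing x v| ≤ M * ∑' k, |v k| :=
  tsum_of_norm_bounded (hv.hasSum.mul_left M) fun k => by
    rw [Real.norm_eq_abs, abs_mul]
    exact mul_le_mul_of_nonneg_right (hx k) (abs_nonneg _)

theorem summable_mul_of_abs_le {v : ℕ → ℝ} (hv : Summable fun k => |v k|) {M : ℝ}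
    (hx : ∀ k, |x k| ≤ M) : Summable fun k => x k * v k :=
  Summable.of_norm_bounded (hv.mul_left M) fun k => by
    rw [Real.norm_eq_abs, abs_mul]
    exact mul_le_mul_of_nonneg_right (hx k) (abs_nonneg _)

theorem pairing_add_single {v : ℕ → ℝ} (hxv : Summable fun k => x k * v k) (k : ℕ) (c : ℝ) :
    pairing (x + Pi.single k c) v = pairing x v + c * v k := by
  simp only [pairing, Pi.add_apply, add_mul, ← Pi.single_mul_left_apply]
  rw [hxv.tsum_add (summable_of_ne_finset_zero (s := {k}) (by simp_all)), tsum_pi_single]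

theorem tendsto_single_atTop_zero {M : Type*} [Zero M] [TopologicalSpace M] (k : ℕ) (c : M) :
    Tendsto (Pi.single k c : ℕ → M) atTop (𝓝 0) :=
  tendsto_const_nhds.congr' <|
    (eventually_gt_atTop k).mono fun j hj => by simp [hj.ne']

theorem abs_le_one_of_tsum_abs_le_one {v : ℕ → ℝ} (hs : Summable fun k => |v k|)
    (h₁ : ∑' k, |v k| ≤ 1) (k : ℕ) : |v k| ≤ 1 :=
  (hs.le_tsum k fun j _ => abs_nonneg (v j)).trans h₁

end Sequences

section ReadNorm

variable {r : ℕ → ℝ} {v : ℕ → ℕ → ℝ} {x : ℕ → ℝ}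

theorem supNorm_le_readNorm (hr : ∀ n, 0 ≤ r n) (v : ℕ → ℕ → ℝ) (x : ℕ → ℝ) :
    supNorm x ≤ readNorm r v x :=
  le_add_of_nonneg_right (tsum_nonneg fun n => mul_nonneg (hr n) (abs_nonneg _))

theorem abs_pairing_le_supNorm (hv₁ : ∀ n, Summable fun k => |v n k|)
    (hv : ∀ n, ∑' k, |v n k| ≤ 1) (hx : BddAbove (range fun k => |x k|)) (n : ℕ) :
    |pairing x (v n)| ≤ supNorm x :=
  (abs_pairing_le (hv₁ n) (abs_le_supNorm hx)).trans
    (mul_le_of_le_one_right (supNorm_nonneg x) (hv n))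

theorem summable_mul_abs_pairing (hr : ∀ n, 0 ≤ r n) (hrsum : Summable r)
    (hv₁ : ∀ n, Summable fun k => |v n k|) (hv : ∀ n, ∑' k, |v n k| ≤ 1)
    (hx : BddAbove (range fun k => |x k|)) :
    Summable fun n => r n * |pairing x (v n)| :=
  Summable.of_nonneg_of_le (fun n => mul_nonneg (hr n) (abs_nonneg _))
    (fun n => mul_le_mul_of_nonneg_left (abs_pairing_le_supNorm hv₁ hv hx n) (hr n))
    (hrsum.mul_right (supNorm x))

theorem tsum_mul_abs_pairing_le (hr : ∀ n, 0 ≤ r n) (hrsum : Summable r)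
    (hv₁ : ∀ n, Summable fun k => |v n k|) (hv : ∀ n, ∑' k, |v n k| ≤ 1)
    (hx : BddAbove (range fun k => |x k|)) :
    ∑' n, r n * |pairing x (v n)| ≤ (∑' n, r n) * supNorm x := by
  rw [← tsum_mul_right]
  exact (summable_mul_abs_pairing hr hrsum hv₁ hv hx).tsum_le_tsum
    (fun n => mul_le_mul_of_nonneg_left (abs_pairing_le_supNorm hv₁ hv hx n) (hr n))
    (hrsum.mul_right _)

theorem readNorm_le_mul_supNorm (hr : ∀ n, 0 ≤ r n) (hrsum : Summable r)
    (hv₁ : ∀ n, Summable fun k => |v n k|) (hv : ∀ n, ∑' k, |v n k| ≤ 1)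
    (hx : BddAbove (range fun k => |x k|)) :
    readNorm r v x ≤ (1 + ∑' n, r n) * supNorm x := by
  have := tsum_mul_abs_pairing_le hr hrsum hv₁ hv hx
  unfold readNorm
  linarith

theorem readNorm_div_three_le_supNorm (hr : ∀ n, 0 ≤ r n) (hrsum : Summable r)
    (hr₂ : ∑' n, r n ≤ 2) (hv₁ : ∀ n, Summable fun k => |v n k|) (hv : ∀ n, ∑' k, |v n k| ≤ 1)
    (hx : BddAbove (range fun k => |x k|)) :
    readNorm r v x / 3 ≤ supNorm x := by
  have := readNorm_le_mul_supNorm hr hrsum hv₁ hv hx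
  have := mul_le_mul_of_nonneg_right hr₂ (supNorm_nonneg x)
  linarith

theorem tsum_mul_abs_pairing_add_single_le (hr : ∀ n, 0 ≤ r n) (hrsum : Summable r)
    (hv₁ : ∀ n, Summable fun k => |v n k|) (hv : ∀ n, ∑' k, |v n k| ≤ 1)
    (hx : BddAbove (range fun k => |x k|)) (k : ℕ) (c : ℝ) :
    ∑' n, r n * |pairing (x + Pi.single k c) (v n)| ≤
      ∑' n, r n * |pairing x (v n)| + |c| * ∑' n, r n * |v n k| := by
  have hvk : Summable fun n => r n * |v n k| :=
    Summable.of_nonneg_of_le (fun n => mul_nonneg (hr n) (abs_nonneg _))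
      (fun n => mul_le_of_le_one_right (hr n) (abs_le_one_of_tsum_abs_le_one (hv₁ n) (hv n) k))
      hrsum
  have hle : ∀ n, r n * |pairing (x + Pi.single k c) (v n)| ≤
      r n * |pairing x (v n)| + |c| * (r n * |v n k|) := fun n => by
    rw [pairing_add_single (summable_mul_of_abs_le (hv₁ n) (abs_le_supNorm hx))]
    calc r n * |pairing x (v n) + c * v n k|
        ≤ r n * (|pairing x (v n)| + |c| * |v n k|) :=
          mul_le_mul_of_nonneg_left ((abs_add_le _ _).trans_eq (by rw [abs_mul])) (hr n)
      _ = r n * |pairing x (v n)| + |c| * (r n * |v n k|) := by ring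
  have hPx := summable_mul_abs_pairing hr hrsum hv₁ hv hx
  have hsum := hPx.add (hvk.mul_left |c|)
  rw [← tsum_mul_left, ← hPx.tsum_add (hvk.mul_left |c|)]
  exact Summable.tsum_le_tsum hle
    (hsum.of_nonneg_of_le (fun n => mul_nonneg (hr n) (abs_nonneg _)) hle) hsum

theorem readNorm_add_single_le (hr : ∀ n, 0 ≤ r n) (hrsum : Summable r)
    (hv₁ : ∀ n, Summable fun k => |v n k|) (hv : ∀ n, ∑' k, |v n k| ≤ 1)
    (hx : BddAbove (range fun k => |x k|)) {k : ℕ} {c : ℝ} (hc : |c| ≤ supNorm x) :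
    readNorm r v (x + Pi.single k c) ≤
      readNorm r v x + |x k| + |c| * ∑' n, r n * |v n k| := by
  have := tsum_mul_abs_pairing_add_single_le hr hrsum hv₁ hv hx k c
  have := supNorm_add_single_le hx (k := k) hc
  unfold readNorm
  linarith

theorem tendsto_tsum_mul_abs_atTop_zero (hr : ∀ n, 0 ≤ r n) (hrsum : Summable r)
    (hv₁ : ∀ n, Summable fun k => |v n k|) (hv : ∀ n, ∑' k, |v n k| ≤ 1) :
    Tendsto (fun k => ∑' n, r n * |v n k|) atTop (𝓝 0) := by
  simpa using tendsto_tsum_of_dominated_convergence (f := fun k n => r n * |v n k|)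
    (g := fun _ => 0) hrsum (fun n => by simpa using ((hv₁ n).tendsto_atTop_zero).const_mul (r n))
    (Eventually.of_forall fun k n => by
      rw [Real.norm_eq_abs, abs_mul, abs_abs, abs_of_nonneg (hr n)]
      exact mul_le_of_le_one_right (hr n) (abs_le_one_of_tsum_abs_le_one (hv₁ n) (hv n) k))

theorem exists_readNorm_add_single_lt_one (hr : ∀ n, 0 ≤ r n) (hrsum : Summable r)
    (hv₁ : ∀ n, Summable fun k => |v n k|) (hv : ∀ n, ∑' k, |v n k| ≤ 1)
    (hx : Tendsto x atTop (𝓝 0)) (hx₁ : readNorm r v x < 1) :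
    ∃ k, ∀ c, |c| ≤ supNorm x → readNorm r v (x + Pi.single k c) < 1 := by
  have hlim : Tendsto (fun k => |x k| + supNorm x * ∑' n, r n * |v n k|) atTop (𝓝 0) := by
    simpa using hx.abs.add ((tendsto_tsum_mul_abs_atTop_zero hr hrsum hv₁ hv).const_mul _)
  obtain ⟨k, hk⟩ := (hlim.eventually_lt_const (sub_pos.mpr hx₁)).exists
  refine ⟨k, fun c hc => ?_⟩
  have hbdd : BddAbove (range fun k => |x k|) := by simpa using hx.abs.bddAbove_range
  have := readNorm_add_single_le hr hrsum hv₁ hv hbdd (k := k) hc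
  have hτ : 0 ≤ ∑' n, r n * |v n k| := tsum_nonneg fun n => mul_nonneg (hr n) (abs_nonneg _)
  have := mul_le_mul_of_nonneg_right hc hτ
  linarith

end ReadNorm

/-- Read's space is modelled as a normed space `X` carried linearly and isometrically by `e`
onto `c₀` with the norm `readNorm r v`; the limsup is unfolded into `ε`-`δ` form. -/
theorem read_dual_norm_rough_general
    (r : ℕ → ℝ) (hrpos : ∀ n, 0 < r n) (hrsum : Summable r) (hr2 : ∑' n, r n ≤ 2)
    (v : ℕ → ℕ → ℝ) (hv1 : ∀ n, Summable fun k => |v n k|)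
    (hv2 : ∀ n, ∑' k, |v n k| = 1)
    (X : Type*) [NormedAddCommGroup X] [NormedSpace ℝ X]
    (e : X →ₗ[ℝ] (ℕ → ℝ))
    (hc0 : ∀ x, Tendsto (e x) atTop (𝓝 0))
    (hsurj : ∀ f : ℕ → ℝ, Tendsto f atTop (𝓝 0) → ∃ x, e x = f)
    (hnorm : ∀ x, ‖x‖ = readNorm r v (e x))
    (f : StrongDual ℝ X) (hf : ‖f‖ = 1) :
    ∀ ε > 0, ∀ δ > 0, ∃ h : StrongDual ℝ X, 0 < ‖h‖ ∧ ‖h‖ < δ ∧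
      (‖f + h‖ + ‖f - h‖ - 2 * ‖f‖) / ‖h‖ > 2 / 3 - ε := by
  have hr : ∀ n, 0 ≤ r n := fun n => (hrpos n).le
  have hv : ∀ n, ∑' k, |v n k| ≤ 1 := fun n => (hv2 n).le
  have hbdd : ∀ y, BddAbove (range fun k => |e y k|) := fun y => by
    simpa using (hc0 y).abs.bddAbove_range
  refine f.dual_norm_rough_of_segments hf (2 / 3) fun η hη => ?_
  obtain ⟨x, hx₁, hfx⟩ := f.exists_norm_lt_one_lt_apply (a := 1 - η) (by linarith)
  have hxη : 1 - η < ‖x‖ :=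
    hfx.trans_le <| by simpa [hf] using (le_abs_self (f x)).trans (f.le_opNorm x)
  have hc : 0 ≤ ‖x‖ / 3 := by positivity
  have hsup : ‖x‖ / 3 ≤ supNorm (e x) :=
    hnorm x ▸ readNorm_div_three_le_supNorm hr hrsum hr2 hv1 hv (hbdd x)
  obtain ⟨k, hk⟩ := exists_readNorm_add_single_lt_one hr hrsum hv1 hv (hc0 x) (hnorm x ▸ hx₁)
  obtain ⟨w, hw⟩ := hsurj _ (tendsto_single_atTop_zero k (‖x‖ / 3))
  refine ⟨x, w, ?_, ?_, hfx, ?_⟩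
  · rw [hnorm, map_add, hw]
    exact (hk _ (by rwa [abs_of_nonneg hc])).le
  · rw [hnorm, map_sub, hw, sub_eq_add_neg, ← Pi.single_neg]
    exact (hk _ (by rwa [abs_neg, abs_of_nonneg hc])).le
  · calc 2 / 3 / 2 - η ≤ |e w k| := by
          rw [hw, Pi.single_eq_same, abs_of_nonneg hc]; linarith
      _ ≤ ‖w‖ := (abs_le_supNorm (hbdd w) k).trans (hnorm w ▸ supNorm_le_readNorm hr v (e w))

/-- The norm of the dual `ℛ*` of Read's space is `2/3`-rough: for every `x*` in the
unit sphere of `ℛ*`,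
`limsup_{‖h‖→0} (‖x* + h‖ + ‖x* − h‖ − 2‖x*‖)/‖h‖ ≥ 2/3`.
Here Read's space is presented as a normed space `X` linearly isometric, via `e`,
to `c₀` equipped with the norm `|||·|||`, and the limsup inequality is unfolded. -/
theorem read_dual_norm_rough
    (r : ℕ → ℝ) (hrpos : ∀ n, 0 < r n) (hrsum : Summable r) (hr2 : ∑' n, r n ≤ 2)
    (v : ℕ → ℕ → ℝ) (hv1 : ∀ n, Summable fun k => |v n k|)
    (hv2 : ∀ n, ∑' k, |v n k| = 1)
    (hdense : ∀ w : ℕ → ℝ, (Summable fun k => |w k|) → ∑' k, |w k| = 1 →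
      ∀ ε > 0, ∃ n, ∑' k, |w k - v n k| < ε)
    (X : Type*) [NormedAddCommGroup X] [NormedSpace ℝ X]
    (e : X →ₗ[ℝ] (ℕ → ℝ)) (hinj : Function.Injective e)
    (hc0 : ∀ x, Tendsto (e x) atTop (𝓝 0))
    (hsurj : ∀ f : ℕ → ℝ, Tendsto f atTop (𝓝 0) → ∃ x, e x = f)
    (hnorm : ∀ x, ‖x‖ = readNorm r v (e x))
    (f : StrongDual ℝ X) (hf : ‖f‖ = 1) :
    ∀ ε > 0, ∀ δ > 0, ∃ h : StrongDual ℝ X, 0 < ‖h‖ ∧ ‖h‖ < δ ∧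
      (‖f + h‖ + ‖f - h‖ - 2 * ‖f‖) / ‖h‖ > 2 / 3 - ε :=
  read_dual_norm_rough_general r hrpos hrsum hr2 v hv1 hv2 X e hc0 hsurj hnorm f hf
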